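/- arXiv:2002.07930 — 7 statements merged into one kernel-verified Lean document; each statement's English description precedes it below -/
import Mathlib

section
/- If (𝔄, 𝔄₀) and (𝔅, 𝔅₀) are quasi *-algebras, then the algebraic tensor product 𝔄 ⊗ 𝔅 is a quasi *-algebra over the tensor product *-algebra 𝔄₀ ⊗ 𝔅₀, with module actions (x ⊗ y)·(a ⊗ b) = (xa) ⊗ (yb) and (a ⊗ b)·(x ⊗ y) = (ax) ⊗ (by), and involution (a ⊗ b)* = a* ⊗ b*; in particular the quasi *-algebra axioms ((x ⊗ y)(a' ⊗ b'))(x' ⊗ y') = (x ⊗ y)((a' ⊗ b')(x' ⊗ y')), (a ⊗ b)((x ⊗ y)(x' ⊗ y')) = ((a ⊗ b)(x ⊗ y))(x' ⊗ y'), and ((a ⊗ b)(x ⊗ y))* = (x ⊗ y)*(a ⊗ b)* hold. -/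
open scoped TensorProduct

/-- If `(𝔄, 𝔄₀)` and `(𝔅, 𝔅₀)` are quasi *-algebras (the quasi *-algebra
structure being given by the embeddings `ιA, ιB`, the bilinear left and right multiplications
`lA, rA, lB, rB`, and the involutions), then the algebraic tensor product `𝔄 ⊗ 𝔅` is a quasi
*-algebra over the tensor product *-algebra `𝔄₀ ⊗ 𝔅₀`, with module actions
`(x ⊗ y)·(a ⊗ b) = xa ⊗ yb`, `(a ⊗ b)·(x ⊗ y) = ax ⊗ by` and involution
`(a ⊗ b)* = a* ⊗ b*`; in particular the quasi *-algebra axioms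
`((x⊗y)(a'⊗b'))(x'⊗y') = (x⊗y)((a'⊗b')(x'⊗y'))`,
`(a⊗b)((x⊗y)(x'⊗y')) = ((a⊗b)(x⊗y))(x'⊗y')` and
`((a⊗b)(x⊗y))* = (x⊗y)*(a⊗b)*` hold. -/
theorem stmt6 (A A₀ B B₀ : Type*)
    [AddCommGroup A] [Module ℂ A] [StarAddMonoid A] [StarModule ℂ A]
    [AddCommGroup B] [Module ℂ B] [StarAddMonoid B] [StarModule ℂ B]
    [Ring A₀] [Algebra ℂ A₀] [StarRing A₀] [StarModule ℂ A₀]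
    [Ring B₀] [Algebra ℂ B₀] [StarRing B₀] [StarModule ℂ B₀]
    (ιA : A₀ →ₗ[ℂ] A) (ιB : B₀ →ₗ[ℂ] B)
    (lA rA : A₀ →ₗ[ℂ] A →ₗ[ℂ] A) (lB rB : B₀ →ₗ[ℂ] B →ₗ[ℂ] B)
    -- quasi *-algebra axioms for (A, A₀)
    (hA1 : ∀ (x y : A₀) (a : A), rA y (lA x a) = lA x (rA y a))
    (hA2 : ∀ (x y : A₀) (a : A), rA (x * y) a = rA y (rA x a))
    (hA3 : ∀ (x : A₀) (a : A), star (lA x a) = rA (star x) (star a))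
    (hA4 : ∀ (x : A₀) (a : A), star (rA x a) = lA (star x) (star a))
    (hAι : ∀ x y : A₀, lA x (ιA y) = ιA (x * y) ∧ rA y (ιA x) = ιA (x * y))
    (hAstar : ∀ x : A₀, ιA (star x) = star (ιA x))
    -- quasi *-algebra axioms for (B, B₀)
    (hB1 : ∀ (x y : B₀) (b : B), rB y (lB x b) = lB x (rB y b))
    (hB2 : ∀ (x y : B₀) (b : B), rB (x * y) b = rB y (rB x b))
    (hB3 : ∀ (x : B₀) (b : B), star (lB x b) = rB (star x) (star b))
    (hB4 : ∀ (x : B₀) (b : B), star (rB x b) = lB (star x) (star b))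
    (hBι : ∀ x y : B₀, lB x (ιB y) = ιB (x * y) ∧ rB y (ιB x) = ιB (x * y))
    (hBstar : ∀ y : B₀, ιB (star y) = star (ιB y))
    -- the module actions of `A₀ ⊗ B₀` on `A ⊗ B` and the involution of `A ⊗ B`
    (L R : TensorProduct ℂ A₀ B₀ →ₗ[ℂ] TensorProduct ℂ A B →ₗ[ℂ] TensorProduct ℂ A B)
    (hL : ∀ (x : A₀) (y : B₀) (a : A) (b : B),
      L (x ⊗ₜ[ℂ] y) (a ⊗ₜ[ℂ] b) = lA x a ⊗ₜ[ℂ] lB y b)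
    (hR : ∀ (x : A₀) (y : B₀) (a : A) (b : B),
      R (x ⊗ₜ[ℂ] y) (a ⊗ₜ[ℂ] b) = rA x a ⊗ₜ[ℂ] rB y b)
    (S : TensorProduct ℂ A B → TensorProduct ℂ A B)
    (hS : ∀ (a : A) (b : B), S (a ⊗ₜ[ℂ] b) = star a ⊗ₜ[ℂ] star b) :
    -- the quasi *-algebra axioms for (𝔄 ⊗ 𝔅, 𝔄₀ ⊗ 𝔅₀) on elementary tensors
    (∀ (x x' : A₀) (y y' : B₀) (a : A) (b : B),
        R (x' ⊗ₜ[ℂ] y') (L (x ⊗ₜ[ℂ] y) (a ⊗ₜ[ℂ] b))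
          = L (x ⊗ₜ[ℂ] y) (R (x' ⊗ₜ[ℂ] y') (a ⊗ₜ[ℂ] b))) ∧
    (∀ (x x' : A₀) (y y' : B₀) (a : A) (b : B),
        R ((x ⊗ₜ[ℂ] y) * (x' ⊗ₜ[ℂ] y')) (a ⊗ₜ[ℂ] b)
          = R (x' ⊗ₜ[ℂ] y') (R (x ⊗ₜ[ℂ] y) (a ⊗ₜ[ℂ] b))) ∧
    (∀ (x : A₀) (y : B₀) (a : A) (b : B),
        S (R (x ⊗ₜ[ℂ] y) (a ⊗ₜ[ℂ] b))
          = L (star x ⊗ₜ[ℂ] star y) (S (a ⊗ₜ[ℂ] b))) := by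
  refine ⟨?_, ?_, ?_⟩
  · intro x x' y y' a b
    rw [hL, hR, hR, hL, hA1, hB1]
  · intro x x' y y' a b
    rw [Algebra.TensorProduct.tmul_mul_tmul, hR, hR, hR, hA2, hB2]
  · intro x y a b
    rw [hR, hS, hS, hL, hA4, hB4]
end

section
/- Let π be a weakly continuous *-representation of the tensor product Banach quasi *-algebra (𝔄 ⊗̂_n 𝔅, 𝔄₀ ⊗ 𝔅₀) with units e_𝔄, e_𝔅. Define π₁(a) := π(a ⊗ e_𝔅) and π₂(b) := π(e_𝔄 ⊗ b). Then π₁ and π₂ are weakly continuous *-representations of (𝔄, 𝔄₀) and (𝔅, 𝔅₀) respectively, and for x ∈ 𝔄₀, y ∈ 𝔅₀, a ∈ 𝔄, b ∈ 𝔅: π(x ⊗ b) = π₁(x) □ π₂(b) = π₂(b) □ π₁(x) and π(a ⊗ y) = π₁(a) □ π₂(y) = π₂(y) □ π₁(a), where □ denotes the weak multiplication in L†(D_π, H_π). -/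
open scoped TensorProduct
open Filter Topology

/-!
Every claim is the defining property of `π` (weak continuity, `π(c*) = π(c)†`,
`π(c z) = π(c) □ π(z)`) evaluated at elementary tensors one of whose factors is a unit: the
cross-norm identity `n̄(a ⊗ b) = ‖a‖ ‖b‖` turns norm convergence in one factor into
`n̄`-convergence, and the unit laws collapse the products `(a ⊗ e)(x ⊗ 1)`, `(e ⊗ b)(x ⊗ 1)`, ….
Since `π` is only multiplicative for right factors in `𝔄₀ ⊗ 𝔅₀`, the identities
`π(x ⊗ b) = π₁(x) □ π₂(b)` and `π(a ⊗ y) = π₂(y) □ π₁(a)` are obtained through the adjoint: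
`(x ⊗ b)* = (e ⊗ b*)(x* ⊗ 1)`.
-/

section CrossNorm

variable {R A B ι : Type*} [CommRing R] [SeminormedAddCommGroup A] [Module R A]
  [SeminormedAddCommGroup B] [Module R B] {N : A ⊗[R] B → ℝ} {l : Filter ι}

theorem tendsto_crossNorm_sub_tmul (hN : ∀ a b, N (a ⊗ₜ b) = ‖a‖ * ‖b‖) {a : ι → A} {a₀ : A}
    (h : Tendsto (fun n => ‖a n - a₀‖) l (𝓝 0)) (b : B) :
    Tendsto (fun n => N (a n ⊗ₜ b - a₀ ⊗ₜ b)) l (𝓝 0) := by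
  simp only [← TensorProduct.sub_tmul, hN]
  simpa using h.mul_const ‖b‖

theorem tendsto_crossNorm_tmul_sub (hN : ∀ a b, N (a ⊗ₜ b) = ‖a‖ * ‖b‖) (a : A) {b : ι → B}
    {b₀ : B} (h : Tendsto (fun n => ‖b n - b₀‖) l (𝓝 0)) :
    Tendsto (fun n => N (a ⊗ₜ b n - a ⊗ₜ b₀)) l (𝓝 0) := by
  simp only [← TensorProduct.tmul_sub, hN]
  simpa using h.const_mul ‖a‖

end CrossNorm

section TensorRepresentation

variable {𝕜 H A A₀ B B₀ : Type*} [RCLike 𝕜] [NormedAddCommGroup H] [InnerProductSpace 𝕜 H]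
  {D : Submodule 𝕜 H}
  [AddCommGroup A] [Module 𝕜 A] [StarAddMonoid A] [AddCommGroup B] [Module 𝕜 B] [StarAddMonoid B]
  [AddCommMonoid A₀] [Module 𝕜 A₀] [AddCommMonoid B₀] [Module 𝕜 B₀]
  {ιA : A₀ →ₗ[𝕜] A} {ιB : B₀ →ₗ[𝕜] B} {rA : A₀ →ₗ[𝕜] A →ₗ[𝕜] A} {rB : B₀ →ₗ[𝕜] B →ₗ[𝕜] B}
  {R : A₀ ⊗[𝕜] B₀ →ₗ[𝕜] A ⊗[𝕜] B →ₗ[𝕜] A ⊗[𝕜] B} {S : A ⊗[𝕜] B → A ⊗[𝕜] B}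
  {π : A ⊗[𝕜] B →ₗ[𝕜] (D →ₗ[𝕜] H)}

theorem inner_map_tmul_eq_inner_map_star_tmul (hS : ∀ a b, S (a ⊗ₜ b) = star a ⊗ₜ star b)
    (hπstar : ∀ c (ξ η : D), inner 𝕜 (π c ξ) (η : H) = inner 𝕜 (ξ : H) (π (S c) η))
    (a : A) (b : B) (ξ η : D) :
    inner 𝕜 (π (a ⊗ₜ b) ξ) (η : H) = inner 𝕜 (ξ : H) (π (star a ⊗ₜ star b) η) := by
  rw [hπstar, hS]

theorem inner_map_rmul_tmul (hS : ∀ a b, S (a ⊗ₜ b) = star a ⊗ₜ star b)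
    (hR : ∀ x y a b, R (x ⊗ₜ y) (a ⊗ₜ b) = rA x a ⊗ₜ rB y b)
    (hπmult : ∀ c z (ξ η : D), inner 𝕜 (π (R z c) ξ) (η : H)
      = inner 𝕜 (π (TensorProduct.map ιA ιB z) ξ) (π (S c) η))
    (x : A₀) (y : B₀) (a : A) (b : B) (ξ η : D) :
    inner 𝕜 (π (rA x a ⊗ₜ rB y b) ξ) (η : H)
      = inner 𝕜 (π (ιA x ⊗ₜ ιB y) ξ) (π (star a ⊗ₜ star b) η) := by
  rw [← hR, hπmult, hS, TensorProduct.map_tmul]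

theorem inner_map_star_rmul_tmul (hS : ∀ a b, S (a ⊗ₜ b) = star a ⊗ₜ star b)
    (hR : ∀ x y a b, R (x ⊗ₜ y) (a ⊗ₜ b) = rA x a ⊗ₜ rB y b)
    (hπstar : ∀ c (ξ η : D), inner 𝕜 (π c ξ) (η : H) = inner 𝕜 (ξ : H) (π (S c) η))
    (hπmult : ∀ c z (ξ η : D), inner 𝕜 (π (R z c) ξ) (η : H)
      = inner 𝕜 (π (TensorProduct.map ιA ιB z) ξ) (π (S c) η))
    (x : A₀) (y : B₀) (a : A) (b : B) (ξ η : D) :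
    inner 𝕜 (π (star (rA x a) ⊗ₜ star (rB y b)) ξ) (η : H)
      = inner 𝕜 (π (star a ⊗ₜ star b) ξ) (π (ιA x ⊗ₜ ιB y) η) := by
  rw [inner_map_tmul_eq_inner_map_star_tmul hS hπstar, star_star, star_star, ← inner_conj_symm,
    inner_map_rmul_tmul hS hR hπmult, inner_conj_symm]

end TensorRepresentation

theorem stmt10_general
    (H : Type*) [NormedAddCommGroup H] [InnerProductSpace ℂ H]
    (D : Submodule ℂ H)
    (A A₀ B B₀ : Type*)
    [NormedAddCommGroup A] [NormedSpace ℂ A] [StarAddMonoid A]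
    [NormedAddCommGroup B] [NormedSpace ℂ B] [StarAddMonoid B]
    [Ring A₀] [Algebra ℂ A₀] [StarRing A₀]
    [Ring B₀] [Algebra ℂ B₀] [StarRing B₀]
    (ιA : A₀ →ₗ[ℂ] A) (ιB : B₀ →ₗ[ℂ] B)
    (hιAstar : ∀ x : A₀, ιA (star x) = star (ιA x))
    (hιBstar : ∀ y : B₀, ιB (star y) = star (ιB y))
    (lA rA : A₀ →ₗ[ℂ] A →ₗ[ℂ] A) (lB rB : B₀ →ₗ[ℂ] B →ₗ[ℂ] B)
    (hιAmul : ∀ x y : A₀, lA x (ιA y) = ιA (x * y) ∧ rA y (ιA x) = ιA (x * y))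
    (hιBmul : ∀ x y : B₀, lB x (ιB y) = ιB (x * y) ∧ rB y (ιB x) = ιB (x * y))
    (hunitA : ∀ a : A, lA 1 a = a ∧ rA 1 a = a)
    (hunitB : ∀ b : B, lB 1 b = b ∧ rB 1 b = b)
    -- the tensor product quasi *-algebra structure on 𝔄 ⊗ 𝔅 over 𝔄₀ ⊗ 𝔅₀
    (R : TensorProduct ℂ A₀ B₀ →ₗ[ℂ] TensorProduct ℂ A B →ₗ[ℂ] TensorProduct ℂ A B)
    (hR : ∀ (x : A₀) (y : B₀) (a : A) (b : B),
      R (x ⊗ₜ[ℂ] y) (a ⊗ₜ[ℂ] b) = rA x a ⊗ₜ[ℂ] rB y b)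
    (S : TensorProduct ℂ A B → TensorProduct ℂ A B)
    (hS : ∀ (a : A) (b : B), S (a ⊗ₜ[ℂ] b) = star a ⊗ₜ[ℂ] star b)
    -- the uniform cross-norm n̄
    (N : TensorProduct ℂ A B → ℝ)
    (hcross : ∀ (a : A) (b : B), N (a ⊗ₜ[ℂ] b) = ‖a‖ * ‖b‖)
    -- the weakly continuous *-representation π
    (π : TensorProduct ℂ A B →ₗ[ℂ] (D →ₗ[ℂ] H))
    (hπstar : ∀ (c : TensorProduct ℂ A B) (ξ η : D),
      (inner ℂ (π c ξ) (η : H) : ℂ) = inner ℂ (ξ : H) (π (S c) η))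
    (hπmult : ∀ (c : TensorProduct ℂ A B) (z : TensorProduct ℂ A₀ B₀) (ξ η : D),
      (inner ℂ (π (R z c) ξ) (η : H) : ℂ)
        = inner ℂ (π (TensorProduct.map ιA ιB z) ξ) (π (S c) η))
    (hπcont : ∀ (c : ℕ → TensorProduct ℂ A B) (c₀ : TensorProduct ℂ A B),
      Tendsto (fun n => N (c n - c₀)) atTop (nhds 0) →
      ∀ ξ η : D, Tendsto (fun n => (inner ℂ (π (c n) ξ) (η : H) : ℂ)) atTop
        (nhds (inner ℂ (π c₀ ξ) (η : H)))) :
    -- π₁ := π(· ⊗ e_𝔅) is weakly continuous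
    (∀ (a : ℕ → A) (a₀ : A),
      Tendsto (fun n => ‖a n - a₀‖) atTop (nhds 0) →
      ∀ ξ η : D, Tendsto (fun n => (inner ℂ (π (a n ⊗ₜ[ℂ] ιB 1) ξ) (η : H) : ℂ)) atTop
        (nhds (inner ℂ (π (a₀ ⊗ₜ[ℂ] ιB 1) ξ) (η : H)))) ∧
    -- π₂ := π(e_𝔄 ⊗ ·) is weakly continuous
    (∀ (b : ℕ → B) (b₀ : B),
      Tendsto (fun n => ‖b n - b₀‖) atTop (nhds 0) →
      ∀ ξ η : D, Tendsto (fun n => (inner ℂ (π (ιA 1 ⊗ₜ[ℂ] b n) ξ) (η : H) : ℂ)) atTop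
        (nhds (inner ℂ (π (ιA 1 ⊗ₜ[ℂ] b₀) ξ) (η : H)))) ∧
    -- π₁ is a *-representation of (𝔄, 𝔄₀)
    (∀ (a : A) (ξ η : D),
      (inner ℂ (π (a ⊗ₜ[ℂ] ιB 1) ξ) (η : H) : ℂ) = inner ℂ (ξ : H) (π (star a ⊗ₜ[ℂ] ιB 1) η)) ∧
    (∀ (a : A) (x : A₀) (ξ η : D),
      (inner ℂ (π (rA x a ⊗ₜ[ℂ] ιB 1) ξ) (η : H) : ℂ)
        = inner ℂ (π (ιA x ⊗ₜ[ℂ] ιB 1) ξ) (π (star a ⊗ₜ[ℂ] ιB 1) η)) ∧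
    -- π₂ is a *-representation of (𝔅, 𝔅₀)
    (∀ (b : B) (ξ η : D),
      (inner ℂ (π (ιA 1 ⊗ₜ[ℂ] b) ξ) (η : H) : ℂ) = inner ℂ (ξ : H) (π (ιA 1 ⊗ₜ[ℂ] star b) η)) ∧
    (∀ (b : B) (y : B₀) (ξ η : D),
      (inner ℂ (π (ιA 1 ⊗ₜ[ℂ] rB y b) ξ) (η : H) : ℂ)
        = inner ℂ (π (ιA 1 ⊗ₜ[ℂ] ιB y) ξ) (π (ιA 1 ⊗ₜ[ℂ] star b) η)) ∧
    -- π(x ⊗ b) = π₁(x) □ π₂(b) = π₂(b) □ π₁(x)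
    (∀ (x : A₀) (b : B) (ξ η : D),
      (inner ℂ (π (ιA x ⊗ₜ[ℂ] b) ξ) (η : H) : ℂ)
          = inner ℂ (π (ιA 1 ⊗ₜ[ℂ] b) ξ) (π (star (ιA x) ⊗ₜ[ℂ] ιB 1) η) ∧
      (inner ℂ (π (ιA x ⊗ₜ[ℂ] b) ξ) (η : H) : ℂ)
          = inner ℂ (π (ιA x ⊗ₜ[ℂ] ιB 1) ξ) (π (ιA 1 ⊗ₜ[ℂ] star b) η)) ∧
    -- π(a ⊗ y) = π₁(a) □ π₂(y) = π₂(y) □ π₁(a)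
    (∀ (a : A) (y : B₀) (ξ η : D),
      (inner ℂ (π (a ⊗ₜ[ℂ] ιB y) ξ) (η : H) : ℂ)
          = inner ℂ (π (ιA 1 ⊗ₜ[ℂ] ιB y) ξ) (π (star a ⊗ₜ[ℂ] ιB 1) η) ∧
      (inner ℂ (π (a ⊗ₜ[ℂ] ιB y) ξ) (η : H) : ℂ)
          = inner ℂ (π (a ⊗ₜ[ℂ] ιB 1) ξ) (π (ιA 1 ⊗ₜ[ℂ] star (ιB y)) η)) := by
  have hA1 : star (ιA 1) = ιA 1 := by rw [← hιAstar, star_one]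
  have hB1 : star (ιB 1) = ιB 1 := by rw [← hιBstar, star_one]
  have hrA : ∀ x, rA x (ιA 1) = ιA x := fun x => by rw [(hιAmul 1 x).2, one_mul]
  have hrB : ∀ y, rB y (ιB 1) = ιB y := fun y => by rw [(hιBmul 1 y).2, one_mul]
  have hrA1 : ∀ a, rA 1 a = a := fun a => (hunitA a).2
  have hrB1 : ∀ b, rB 1 b = b := fun b => (hunitB b).2
  have hstar := inner_map_tmul_eq_inner_map_star_tmul hS hπstar
  have hmul := inner_map_rmul_tmul hS hR hπmult
  have hmul' := inner_map_star_rmul_tmul hS hR hπstar hπmult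
  refine ⟨fun a a₀ h => hπcont _ _ (tendsto_crossNorm_sub_tmul hcross h _),
    fun b b₀ h => hπcont _ _ (tendsto_crossNorm_tmul_sub hcross _ h),
    fun a => by simpa only [hB1] using hstar a (ιB 1),
    fun a x => by simpa only [hrB, hB1] using hmul x 1 a (ιB 1),
    fun b => by simpa only [hA1] using hstar (ιA 1) b,
    fun b y => by simpa only [hrA, hA1] using hmul 1 y (ιA 1) b,
    fun x b ξ η => ⟨?_, by simpa only [hrA, hrB1, hA1] using hmul x 1 (ιA 1) b ξ η⟩,
    fun a y ξ η => ⟨by simpa only [hrB, hrA1, hB1] using hmul 1 y a (ιB 1) ξ η, ?_⟩⟩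
  · simpa only [hrA, hrB1, hιAstar, star_star, hA1]
      using hmul' (star x) 1 (ιA 1) (star b) ξ η
  · simpa only [hrB, hrA1, hιBstar, star_star, hB1]
      using hmul' 1 (star y) (star a) (ιB 1) ξ η

/-- Let `π` be a weakly continuous *-representation of the tensor product
Banach quasi *-algebra `(𝔄 ⊗̂ₙ 𝔅, 𝔄₀ ⊗ 𝔅₀)` with units `e_𝔄 = ιA 1`, `e_𝔅 = ιB 1`, acting on
`L†(D, H)` (operators `D →ₗ H`, with the *-representation conditions expressed through matrix
elements, `π(c*) = π(c)†` and `π(c z) = π(c) □ π(z)`). Put `π₁(a) := π(a ⊗ e_𝔅)` and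
`π₂(b) := π(e_𝔄 ⊗ b)`. Then `π₁` and `π₂` are weakly continuous *-representations of `(𝔄, 𝔄₀)`
and `(𝔅, 𝔅₀)` respectively, and `π(x ⊗ b) = π₁(x) □ π₂(b) = π₂(b) □ π₁(x)`,
`π(a ⊗ y) = π₁(a) □ π₂(y) = π₂(y) □ π₁(a)` (as identities of matrix elements, where
`⟪(T □ S)ξ, η⟫ = ⟪Sξ, T† η⟫`). -/
theorem stmt10
    (H : Type*) [NormedAddCommGroup H] [InnerProductSpace ℂ H] [CompleteSpace H]
    (D : Submodule ℂ H) (hD : Dense (D : Set H))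
    (A A₀ B B₀ : Type*)
    [NormedAddCommGroup A] [NormedSpace ℂ A] [StarAddMonoid A] [StarModule ℂ A]
    [NormedAddCommGroup B] [NormedSpace ℂ B] [StarAddMonoid B] [StarModule ℂ B]
    [CompleteSpace A] [CompleteSpace B]
    [Ring A₀] [Algebra ℂ A₀] [StarRing A₀] [StarModule ℂ A₀]
    [Ring B₀] [Algebra ℂ B₀] [StarRing B₀] [StarModule ℂ B₀]
    (ιA : A₀ →ₗ[ℂ] A) (ιB : B₀ →ₗ[ℂ] B)
    (hιAstar : ∀ x : A₀, ιA (star x) = star (ιA x))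
    (hιBstar : ∀ y : B₀, ιB (star y) = star (ιB y))
    (lA rA : A₀ →ₗ[ℂ] A →ₗ[ℂ] A) (lB rB : B₀ →ₗ[ℂ] B →ₗ[ℂ] B)
    (hιAmul : ∀ x y : A₀, lA x (ιA y) = ιA (x * y) ∧ rA y (ιA x) = ιA (x * y))
    (hιBmul : ∀ x y : B₀, lB x (ιB y) = ιB (x * y) ∧ rB y (ιB x) = ιB (x * y))
    (hunitA : ∀ a : A, lA 1 a = a ∧ rA 1 a = a)
    (hunitB : ∀ b : B, lB 1 b = b ∧ rB 1 b = b)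
    -- the tensor product quasi *-algebra structure on 𝔄 ⊗ 𝔅 over 𝔄₀ ⊗ 𝔅₀
    (L R : TensorProduct ℂ A₀ B₀ →ₗ[ℂ] TensorProduct ℂ A B →ₗ[ℂ] TensorProduct ℂ A B)
    (hL : ∀ (x : A₀) (y : B₀) (a : A) (b : B),
      L (x ⊗ₜ[ℂ] y) (a ⊗ₜ[ℂ] b) = lA x a ⊗ₜ[ℂ] lB y b)
    (hR : ∀ (x : A₀) (y : B₀) (a : A) (b : B),
      R (x ⊗ₜ[ℂ] y) (a ⊗ₜ[ℂ] b) = rA x a ⊗ₜ[ℂ] rB y b)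
    (S : TensorProduct ℂ A B → TensorProduct ℂ A B)
    (hS : ∀ (a : A) (b : B), S (a ⊗ₜ[ℂ] b) = star a ⊗ₜ[ℂ] star b)
    -- the uniform cross-norm n̄
    (N : TensorProduct ℂ A B → ℝ)
    (hcross : ∀ (a : A) (b : B), N (a ⊗ₜ[ℂ] b) = ‖a‖ * ‖b‖)
    -- the weakly continuous *-representation π
    (π : TensorProduct ℂ A B →ₗ[ℂ] (D →ₗ[ℂ] H))
    (hπstar : ∀ (c : TensorProduct ℂ A B) (ξ η : D),
      (inner ℂ (π c ξ) (η : H) : ℂ) = inner ℂ (ξ : H) (π (S c) η))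
    (hπmult : ∀ (c : TensorProduct ℂ A B) (z : TensorProduct ℂ A₀ B₀) (ξ η : D),
      (inner ℂ (π (R z c) ξ) (η : H) : ℂ)
        = inner ℂ (π (TensorProduct.map ιA ιB z) ξ) (π (S c) η))
    (hπcont : ∀ (c : ℕ → TensorProduct ℂ A B) (c₀ : TensorProduct ℂ A B),
      Tendsto (fun n => N (c n - c₀)) atTop (nhds 0) →
      ∀ ξ η : D, Tendsto (fun n => (inner ℂ (π (c n) ξ) (η : H) : ℂ)) atTop
        (nhds (inner ℂ (π c₀ ξ) (η : H)))) :
    -- π₁ := π(· ⊗ e_𝔅) is weakly continuous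
    (∀ (a : ℕ → A) (a₀ : A),
      Tendsto (fun n => ‖a n - a₀‖) atTop (nhds 0) →
      ∀ ξ η : D, Tendsto (fun n => (inner ℂ (π (a n ⊗ₜ[ℂ] ιB 1) ξ) (η : H) : ℂ)) atTop
        (nhds (inner ℂ (π (a₀ ⊗ₜ[ℂ] ιB 1) ξ) (η : H)))) ∧
    -- π₂ := π(e_𝔄 ⊗ ·) is weakly continuous
    (∀ (b : ℕ → B) (b₀ : B),
      Tendsto (fun n => ‖b n - b₀‖) atTop (nhds 0) →
      ∀ ξ η : D, Tendsto (fun n => (inner ℂ (π (ιA 1 ⊗ₜ[ℂ] b n) ξ) (η : H) : ℂ)) atTop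
        (nhds (inner ℂ (π (ιA 1 ⊗ₜ[ℂ] b₀) ξ) (η : H)))) ∧
    -- π₁ is a *-representation of (𝔄, 𝔄₀)
    (∀ (a : A) (ξ η : D),
      (inner ℂ (π (a ⊗ₜ[ℂ] ιB 1) ξ) (η : H) : ℂ) = inner ℂ (ξ : H) (π (star a ⊗ₜ[ℂ] ιB 1) η)) ∧
    (∀ (a : A) (x : A₀) (ξ η : D),
      (inner ℂ (π (rA x a ⊗ₜ[ℂ] ιB 1) ξ) (η : H) : ℂ)
        = inner ℂ (π (ιA x ⊗ₜ[ℂ] ιB 1) ξ) (π (star a ⊗ₜ[ℂ] ιB 1) η)) ∧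
    -- π₂ is a *-representation of (𝔅, 𝔅₀)
    (∀ (b : B) (ξ η : D),
      (inner ℂ (π (ιA 1 ⊗ₜ[ℂ] b) ξ) (η : H) : ℂ) = inner ℂ (ξ : H) (π (ιA 1 ⊗ₜ[ℂ] star b) η)) ∧
    (∀ (b : B) (y : B₀) (ξ η : D),
      (inner ℂ (π (ιA 1 ⊗ₜ[ℂ] rB y b) ξ) (η : H) : ℂ)
        = inner ℂ (π (ιA 1 ⊗ₜ[ℂ] ιB y) ξ) (π (ιA 1 ⊗ₜ[ℂ] star b) η)) ∧
    -- π(x ⊗ b) = π₁(x) □ π₂(b) = π₂(b) □ π₁(x)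
    (∀ (x : A₀) (b : B) (ξ η : D),
      (inner ℂ (π (ιA x ⊗ₜ[ℂ] b) ξ) (η : H) : ℂ)
          = inner ℂ (π (ιA 1 ⊗ₜ[ℂ] b) ξ) (π (star (ιA x) ⊗ₜ[ℂ] ιB 1) η) ∧
      (inner ℂ (π (ιA x ⊗ₜ[ℂ] b) ξ) (η : H) : ℂ)
          = inner ℂ (π (ιA x ⊗ₜ[ℂ] ιB 1) ξ) (π (ιA 1 ⊗ₜ[ℂ] star b) η)) ∧
    -- π(a ⊗ y) = π₁(a) □ π₂(y) = π₂(y) □ π₁(a)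
    (∀ (a : A) (y : B₀) (ξ η : D),
      (inner ℂ (π (a ⊗ₜ[ℂ] ιB y) ξ) (η : H) : ℂ)
          = inner ℂ (π (ιA 1 ⊗ₜ[ℂ] ιB y) ξ) (π (star a ⊗ₜ[ℂ] ιB 1) η) ∧
      (inner ℂ (π (a ⊗ₜ[ℂ] ιB y) ξ) (η : H) : ℂ)
          = inner ℂ (π (a ⊗ₜ[ℂ] ιB 1) ξ) (π (ιA 1 ⊗ₜ[ℂ] star (ιB y)) η)) :=
  stmt10_general H D A A₀ B B₀ ιA ιB hιAstar hιBstar lA rA lB rB hιAmul hιBmul hunitA hunitB R hR S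
    hS N hcross π hπstar hπmult hπcont
end

section
/- Let π₁, π₂ be *-representations of quasi *-algebras (𝔄, 𝔄₀), (𝔅, 𝔅₀) on domains D_{π₁} ⊂ H_{π₁}, D_{π₂} ⊂ H_{π₂}. Then there is a unique *-representation π = π₁ ⊗ π₂ of the tensor product quasi *-algebra (𝔄 ⊗ 𝔅, 𝔄₀ ⊗ 𝔅₀) on D_{π₁} ⊗ D_{π₂} ⊂ H_{π₁} ⊗̂ H_{π₂} defined by π(Σᵢ aᵢ ⊗ bᵢ) = Σᵢ π₁(aᵢ) ⊗ π₂(bᵢ); in particular π(c*) = (π(c))† for all c ∈ 𝔄 ⊗ 𝔅 and π(cz) = π(c) □ π(z) for all c ∈ 𝔄 ⊗ 𝔅, z ∈ 𝔄₀ ⊗ 𝔅₀. -/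
/-!
Each identity is an equality of two expressions that are additive in every tensor-product
argument, so it suffices to check it on elementary tensors `a ⊗ b`, `ξ ⊗ η`. There `ip` factors
as `⟪·,·⟫₁ ⟪·,·⟫₂`, and the identity is the product of the corresponding identities for `π₁`
and `π₂`.
-/

open scoped TensorProduct

namespace TensorProduct

variable {R M N M' N' G : Type*} [CommSemiring R]
  [AddCommMonoid M] [Module R M] [AddCommMonoid N] [Module R N]
  [AddCommMonoid M'] [Module R M'] [AddCommMonoid N'] [Module R N'] [AddGroup G]

theorem eq_of_map_add_of_tmul {f g : M ⊗[R] N → G}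
    (hf : ∀ x y, f (x + y) = f x + f y) (hg : ∀ x y, g (x + y) = g x + g y)
    (h : ∀ m n, f (m ⊗ₜ n) = g (m ⊗ₜ n)) : ∀ x, f x = g x := by
  intro x
  induction x using TensorProduct.induction_on with
  | zero => exact (AddMonoidHom.mk' f hf).map_zero.trans (AddMonoidHom.mk' g hg).map_zero.symm
  | tmul m n => exact h m n
  | add x y hx hy => rw [hf, hg, hx, hy]

theorem eq_of_map_add_of_tmul₂ {f g : M ⊗[R] N → M' ⊗[R] N' → G}
    (hf₁ : ∀ x y z, f (x + y) z = f x z + f y z) (hf₂ : ∀ x y z, f x (y + z) = f x y + f x z)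
    (hg₁ : ∀ x y z, g (x + y) z = g x z + g y z) (hg₂ : ∀ x y z, g x (y + z) = g x y + g x z)
    (h : ∀ m n m' n', f (m ⊗ₜ n) (m' ⊗ₜ n') = g (m ⊗ₜ n) (m' ⊗ₜ n')) :
    ∀ x y, f x y = g x y := by
  refine fun x => congrFun (eq_of_map_add_of_tmul (fun x y => funext (hf₁ x y))
    (fun x y => funext (hg₁ x y)) (fun m n => funext ?_) x)
  exact eq_of_map_add_of_tmul (hf₂ _) (hg₂ _) (h m n)

end TensorProduct

section

open TensorProduct

section TensorRep

variable {R A B V₁ V₂ W₁ W₂ : Type*} [CommSemiring R]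
  [AddCommMonoid A] [Module R A] [AddCommMonoid B] [Module R B]
  [AddCommMonoid V₁] [Module R V₁] [AddCommMonoid V₂] [Module R V₂]
  [AddCommMonoid W₁] [Module R W₁] [AddCommMonoid W₂] [Module R W₂]

def tensorRep (π₁ : A →ₗ[R] V₁ →ₗ[R] W₁) (π₂ : B →ₗ[R] V₂ →ₗ[R] W₂) :
    A ⊗[R] B →ₗ[R] V₁ ⊗[R] V₂ →ₗ[R] W₁ ⊗[R] W₂ :=
  lift ((mapBilinear (RingHom.id R) V₁ V₂ W₁ W₂).compl₁₂ π₁ π₂)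

variable (π₁ : A →ₗ[R] V₁ →ₗ[R] W₁) (π₂ : B →ₗ[R] V₂ →ₗ[R] W₂)

@[simp]
theorem tensorRep_tmul (a : A) (b : B) : tensorRep π₁ π₂ (a ⊗ₜ b) = map (π₁ a) (π₂ b) := by
  simp [tensorRep]

theorem tensorRep_tmul_tmul (a : A) (b : B) (ξ : V₁) (η : V₂) :
    tensorRep π₁ π₂ (a ⊗ₜ b) (ξ ⊗ₜ η) = π₁ a ξ ⊗ₜ π₂ b η := by
  rw [tensorRep_tmul, map_tmul]

theorem eq_tensorRep {π : A ⊗[R] B →ₗ[R] V₁ ⊗[R] V₂ →ₗ[R] W₁ ⊗[R] W₂}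
    (h : ∀ a b ξ η, π (a ⊗ₜ b) (ξ ⊗ₜ η) = π₁ a ξ ⊗ₜ π₂ b η) : π = tensorRep π₁ π₂ :=
  ext' fun a b => ext' fun ξ η => by rw [h, tensorRep_tmul_tmul]

end TensorRep

variable {𝕜 H₁ H₂ : Type*} [RCLike 𝕜]
  [NormedAddCommGroup H₁] [InnerProductSpace 𝕜 H₁] [NormedAddCommGroup H₂] [InnerProductSpace 𝕜 H₂]

/-- `ip` stands for the inner product of the Hilbert space tensor product `H₁ ⊗̂ H₂`, restricted
to the algebraic tensor product. -/
structure IsTensorInner (ip : H₁ ⊗[𝕜] H₂ → H₁ ⊗[𝕜] H₂ → 𝕜) : Prop where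
  tmul_tmul : ∀ (u₁ u₂ : H₁) (v₁ v₂ : H₂),
    ip (u₁ ⊗ₜ v₁) (u₂ ⊗ₜ v₂) = (inner 𝕜 u₁ u₂ : 𝕜) * inner 𝕜 v₁ v₂
  add_left : ∀ u v w, ip (u + v) w = ip u w + ip v w
  add_right : ∀ u v w, ip u (v + w) = ip u v + ip u w

namespace IsTensorInner

variable {ip : H₁ ⊗[𝕜] H₂ → H₁ ⊗[𝕜] H₂ → 𝕜}

theorem map_map_eq (hip : IsTensorInner ip) {V₁ V₂ : Type*}
    [AddCommGroup V₁] [Module 𝕜 V₁] [AddCommGroup V₂] [Module 𝕜 V₂]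
    {T₁ T₁' U₁ U₁' : V₁ →ₗ[𝕜] H₁} {T₂ T₂' U₂ U₂' : V₂ →ₗ[𝕜] H₂}
    (h₁ : ∀ ξ η, inner 𝕜 (T₁ ξ) (T₁' η) = inner 𝕜 (U₁ ξ) (U₁' η))
    (h₂ : ∀ ξ η, inner 𝕜 (T₂ ξ) (T₂' η) = inner 𝕜 (U₂ ξ) (U₂' η)) :
    ∀ Ξ Θ, ip (map T₁ T₂ Ξ) (map T₁' T₂' Θ) = ip (map U₁ U₂ Ξ) (map U₁' U₂' Θ) := by
  refine eq_of_map_add_of_tmul₂ ?_ ?_ ?_ ?_ fun ξ η ξ' η' => by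
    simp only [map_tmul, hip.tmul_tmul, h₁, h₂]
  all_goals intros; simp only [map_add, hip.add_left, hip.add_right]

variable {D₁ : Submodule 𝕜 H₁} {D₂ : Submodule 𝕜 H₂}
  {A B : Type*} [AddCommGroup A] [Module 𝕜 A] [StarAddMonoid A]
  [AddCommGroup B] [Module 𝕜 B] [StarAddMonoid B]
  {π₁ : A →ₗ[𝕜] D₁ →ₗ[𝕜] H₁} {π₂ : B →ₗ[𝕜] D₂ →ₗ[𝕜] H₂}
  {S : A ⊗[𝕜] B →+ A ⊗[𝕜] B}

theorem tensorRep_star (hip : IsTensorInner ip)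
    (hπ₁ : ∀ a (ξ η : D₁), inner 𝕜 (π₁ a ξ) (η : H₁) = inner 𝕜 (ξ : H₁) (π₁ (star a) η))
    (hπ₂ : ∀ b (ξ η : D₂), inner 𝕜 (π₂ b ξ) (η : H₂) = inner 𝕜 (ξ : H₂) (π₂ (star b) η))
    (hS : ∀ a b, S (a ⊗ₜ b) = star a ⊗ₜ star b) (c : A ⊗[𝕜] B) (Ξ Θ : D₁ ⊗[𝕜] D₂) :
    ip (tensorRep π₁ π₂ c Ξ) (map D₁.subtype D₂.subtype Θ) =
      ip (map D₁.subtype D₂.subtype Ξ) (tensorRep π₁ π₂ (S c) Θ) := by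
  revert c
  refine eq_of_map_add_of_tmul ?_ ?_ fun a b => by
    simp only [hS, tensorRep_tmul]
    exact hip.map_map_eq (hπ₁ a) (hπ₂ b) Ξ Θ
  all_goals intros; simp only [map_add, LinearMap.add_apply, hip.add_left, hip.add_right]

theorem tensorRep_mul (hip : IsTensorInner ip) {A₀ B₀ : Type*}
    [AddCommGroup A₀] [Module 𝕜 A₀] [AddCommGroup B₀] [Module 𝕜 B₀]
    {ιA : A₀ →ₗ[𝕜] A} {ιB : B₀ →ₗ[𝕜] B} {rA : A₀ →ₗ[𝕜] A →ₗ[𝕜] A} {rB : B₀ →ₗ[𝕜] B →ₗ[𝕜] B}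
    (hπ₁ : ∀ a x (ξ η : D₁),
      inner 𝕜 (π₁ (rA x a) ξ) (η : H₁) = inner 𝕜 (π₁ (ιA x) ξ) (π₁ (star a) η))
    (hπ₂ : ∀ b y (ξ η : D₂),
      inner 𝕜 (π₂ (rB y b) ξ) (η : H₂) = inner 𝕜 (π₂ (ιB y) ξ) (π₂ (star b) η))
    {R : A₀ ⊗[𝕜] B₀ →ₗ[𝕜] A ⊗[𝕜] B →ₗ[𝕜] A ⊗[𝕜] B}
    (hR : ∀ x y a b, R (x ⊗ₜ y) (a ⊗ₜ b) = rA x a ⊗ₜ rB y b)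
    (hS : ∀ a b, S (a ⊗ₜ b) = star a ⊗ₜ star b) (c : A ⊗[𝕜] B) (z : A₀ ⊗[𝕜] B₀)
    (Ξ Θ : D₁ ⊗[𝕜] D₂) :
    ip (tensorRep π₁ π₂ (R z c) Ξ) (map D₁.subtype D₂.subtype Θ) =
      ip (tensorRep π₁ π₂ (map ιA ιB z) Ξ) (tensorRep π₁ π₂ (S c) Θ) := by
  revert c z
  refine eq_of_map_add_of_tmul₂ ?_ ?_ ?_ ?_ fun a b x y => by
    simp only [hR, hS, map_tmul, tensorRep_tmul]
    exact hip.map_map_eq (hπ₁ a x) (hπ₂ b y) Ξ Θ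
  all_goals intros; simp only [map_add, LinearMap.add_apply, hip.add_left, hip.add_right]

end IsTensorInner

end

theorem stmt12_general
    (H₁ H₂ : Type*)
    [NormedAddCommGroup H₁] [InnerProductSpace ℂ H₁]
    [NormedAddCommGroup H₂] [InnerProductSpace ℂ H₂]
    (D₁ : Submodule ℂ H₁) (D₂ : Submodule ℂ H₂)
    (A A₀ B B₀ : Type*)
    [AddCommGroup A] [Module ℂ A] [StarAddMonoid A]
    [AddCommGroup B] [Module ℂ B] [StarAddMonoid B]
    [Ring A₀] [Algebra ℂ A₀]
    [Ring B₀] [Algebra ℂ B₀]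
    (ιA : A₀ →ₗ[ℂ] A) (ιB : B₀ →ₗ[ℂ] B)
    (rA : A₀ →ₗ[ℂ] A →ₗ[ℂ] A) (rB : B₀ →ₗ[ℂ] B →ₗ[ℂ] B)
    -- the *-representations π₁ and π₂ (with the *-representation axioms in matrix-element form)
    (π₁ : A →ₗ[ℂ] (D₁ →ₗ[ℂ] H₁)) (π₂ : B →ₗ[ℂ] (D₂ →ₗ[ℂ] H₂))
    (hπ₁star : ∀ (a : A) (ξ η : D₁),
      (inner ℂ (π₁ a ξ) (η : H₁) : ℂ) = inner ℂ (ξ : H₁) (π₁ (star a) η))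
    (hπ₁mult : ∀ (a : A) (x : A₀) (ξ η : D₁),
      (inner ℂ (π₁ (rA x a) ξ) (η : H₁) : ℂ) = inner ℂ (π₁ (ιA x) ξ) (π₁ (star a) η))
    (hπ₂star : ∀ (b : B) (ξ η : D₂),
      (inner ℂ (π₂ b ξ) (η : H₂) : ℂ) = inner ℂ (ξ : H₂) (π₂ (star b) η))
    (hπ₂mult : ∀ (b : B) (y : B₀) (ξ η : D₂),
      (inner ℂ (π₂ (rB y b) ξ) (η : H₂) : ℂ) = inner ℂ (π₂ (ιB y) ξ) (π₂ (star b) η))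
    -- the right action of 𝔄₀ ⊗ 𝔅₀ and the involution of 𝔄 ⊗ 𝔅
    (R : TensorProduct ℂ A₀ B₀ →ₗ[ℂ] TensorProduct ℂ A B →ₗ[ℂ] TensorProduct ℂ A B)
    (hR : ∀ (x : A₀) (y : B₀) (a : A) (b : B),
      R (x ⊗ₜ[ℂ] y) (a ⊗ₜ[ℂ] b) = rA x a ⊗ₜ[ℂ] rB y b)
    (S : TensorProduct ℂ A B → TensorProduct ℂ A B)
    (hS : ∀ (a : A) (b : B), S (a ⊗ₜ[ℂ] b) = star a ⊗ₜ[ℂ] star b)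
    (hSadd : ∀ u v, S (u + v) = S u + S v)
    -- the inner product of the Hilbert space tensor product H₁ ⊗̂ H₂
    (ip : TensorProduct ℂ H₁ H₂ → TensorProduct ℂ H₁ H₂ → ℂ)
    (hip : ∀ (u₁ u₂ : H₁) (v₁ v₂ : H₂),
      ip (u₁ ⊗ₜ[ℂ] v₁) (u₂ ⊗ₜ[ℂ] v₂) = (inner ℂ u₁ u₂ : ℂ) * (inner ℂ v₁ v₂ : ℂ))
    (hipaddl : ∀ u v w, ip (u + v) w = ip u w + ip v w)
    (hipaddr : ∀ u v w, ip u (v + w) = ip u v + ip u w) :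
    -- π := π₁ ⊗ π₂
    letI π : TensorProduct ℂ A B →ₗ[ℂ]
        (TensorProduct ℂ D₁ D₂ →ₗ[ℂ] TensorProduct ℂ H₁ H₂) :=
      TensorProduct.lift ((TensorProduct.mapBilinear (σ₁₂ := RingHom.id ℂ) (M := D₁) (N := D₂) (M₂ := H₁) (N₂ := H₂)).compl₁₂ π₁ π₂)
    letI inc : TensorProduct ℂ D₁ D₂ →ₗ[ℂ] TensorProduct ℂ H₁ H₂ :=
      TensorProduct.map D₁.subtype D₂.subtype
    -- π(a ⊗ b)(ξ ⊗ η) = π₁(a)ξ ⊗ π₂(b)η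
    ((∀ (a : A) (b : B) (ξ : D₁) (η : D₂),
        π (a ⊗ₜ[ℂ] b) (ξ ⊗ₜ[ℂ] η) = π₁ a ξ ⊗ₜ[ℂ] π₂ b η) ∧
    -- uniqueness
    (∀ π' : TensorProduct ℂ A B →ₗ[ℂ]
        (TensorProduct ℂ D₁ D₂ →ₗ[ℂ] TensorProduct ℂ H₁ H₂),
      (∀ (a : A) (b : B) (ξ : D₁) (η : D₂),
        π' (a ⊗ₜ[ℂ] b) (ξ ⊗ₜ[ℂ] η) = π₁ a ξ ⊗ₜ[ℂ] π₂ b η) → π' = π) ∧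
    -- π(c*) = π(c)†
    (∀ (c : TensorProduct ℂ A B) (Ξ Θ : TensorProduct ℂ D₁ D₂),
      ip (π c Ξ) (inc Θ) = ip (inc Ξ) (π (S c) Θ)) ∧
    -- π(cz) = π(c) □ π(z)
    (∀ (c : TensorProduct ℂ A B) (z : TensorProduct ℂ A₀ B₀)
        (Ξ Θ : TensorProduct ℂ D₁ D₂),
      ip (π (R z c) Ξ) (inc Θ)
        = ip (π (TensorProduct.map ιA ιB z) Ξ) (π (S c) Θ))) := by
  have hip_tensor : IsTensorInner ip := ⟨hip, hipaddl, hipaddr⟩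
  exact ⟨tensorRep_tmul_tmul π₁ π₂, fun _ => eq_tensorRep π₁ π₂,
    hip_tensor.tensorRep_star hπ₁star hπ₂star (S := AddMonoidHom.mk' S hSadd) hS,
    hip_tensor.tensorRep_mul hπ₁mult hπ₂mult hR (S := AddMonoidHom.mk' S hSadd) hS⟩

/-- Let `π₁, π₂` be *-representations of the quasi *-algebras `(𝔄, 𝔄₀)`,
`(𝔅, 𝔅₀)` on dense domains `D₁ ⊂ H₁`, `D₂ ⊂ H₂`. Then there is a unique *-representation
`π = π₁ ⊗ π₂` of the tensor product quasi *-algebra `(𝔄 ⊗ 𝔅, 𝔄₀ ⊗ 𝔅₀)` on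
`D₁ ⊗ D₂ ⊂ H₁ ⊗̂ H₂` with `π(Σᵢ aᵢ ⊗ bᵢ) = Σᵢ π₁(aᵢ) ⊗ π₂(bᵢ)`; moreover `π(c*) = π(c)†`
and `π(cz) = π(c) □ π(z)` for all `c ∈ 𝔄 ⊗ 𝔅`, `z ∈ 𝔄₀ ⊗ 𝔅₀` (expressed through the
matrix elements relative to the tensor product inner product `ip`). -/
theorem stmt12
    (H₁ H₂ : Type*)
    [NormedAddCommGroup H₁] [InnerProductSpace ℂ H₁] [CompleteSpace H₁]
    [NormedAddCommGroup H₂] [InnerProductSpace ℂ H₂] [CompleteSpace H₂]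
    (D₁ : Submodule ℂ H₁) (D₂ : Submodule ℂ H₂)
    (hD₁ : Dense (D₁ : Set H₁)) (hD₂ : Dense (D₂ : Set H₂))
    (A A₀ B B₀ : Type*)
    [AddCommGroup A] [Module ℂ A] [StarAddMonoid A] [StarModule ℂ A]
    [AddCommGroup B] [Module ℂ B] [StarAddMonoid B] [StarModule ℂ B]
    [Ring A₀] [Algebra ℂ A₀] [StarRing A₀] [StarModule ℂ A₀]
    [Ring B₀] [Algebra ℂ B₀] [StarRing B₀] [StarModule ℂ B₀]
    (ιA : A₀ →ₗ[ℂ] A) (ιB : B₀ →ₗ[ℂ] B)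
    (lA rA : A₀ →ₗ[ℂ] A →ₗ[ℂ] A) (lB rB : B₀ →ₗ[ℂ] B →ₗ[ℂ] B)
    -- the *-representations π₁ and π₂ (with the *-representation axioms in matrix-element form)
    (π₁ : A →ₗ[ℂ] (D₁ →ₗ[ℂ] H₁)) (π₂ : B →ₗ[ℂ] (D₂ →ₗ[ℂ] H₂))
    (hπ₁star : ∀ (a : A) (ξ η : D₁),
      (inner ℂ (π₁ a ξ) (η : H₁) : ℂ) = inner ℂ (ξ : H₁) (π₁ (star a) η))
    (hπ₁mult : ∀ (a : A) (x : A₀) (ξ η : D₁),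
      (inner ℂ (π₁ (rA x a) ξ) (η : H₁) : ℂ) = inner ℂ (π₁ (ιA x) ξ) (π₁ (star a) η))
    (hπ₂star : ∀ (b : B) (ξ η : D₂),
      (inner ℂ (π₂ b ξ) (η : H₂) : ℂ) = inner ℂ (ξ : H₂) (π₂ (star b) η))
    (hπ₂mult : ∀ (b : B) (y : B₀) (ξ η : D₂),
      (inner ℂ (π₂ (rB y b) ξ) (η : H₂) : ℂ) = inner ℂ (π₂ (ιB y) ξ) (π₂ (star b) η))
    -- the right action of 𝔄₀ ⊗ 𝔅₀ and the involution of 𝔄 ⊗ 𝔅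
    (R : TensorProduct ℂ A₀ B₀ →ₗ[ℂ] TensorProduct ℂ A B →ₗ[ℂ] TensorProduct ℂ A B)
    (hR : ∀ (x : A₀) (y : B₀) (a : A) (b : B),
      R (x ⊗ₜ[ℂ] y) (a ⊗ₜ[ℂ] b) = rA x a ⊗ₜ[ℂ] rB y b)
    (S : TensorProduct ℂ A B → TensorProduct ℂ A B)
    (hS : ∀ (a : A) (b : B), S (a ⊗ₜ[ℂ] b) = star a ⊗ₜ[ℂ] star b)
    (hSadd : ∀ u v, S (u + v) = S u + S v)
    -- the inner product of the Hilbert space tensor product H₁ ⊗̂ H₂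
    (ip : TensorProduct ℂ H₁ H₂ → TensorProduct ℂ H₁ H₂ → ℂ)
    (hip : ∀ (u₁ u₂ : H₁) (v₁ v₂ : H₂),
      ip (u₁ ⊗ₜ[ℂ] v₁) (u₂ ⊗ₜ[ℂ] v₂) = (inner ℂ u₁ u₂ : ℂ) * (inner ℂ v₁ v₂ : ℂ))
    (hipaddl : ∀ u v w, ip (u + v) w = ip u w + ip v w)
    (hipaddr : ∀ u v w, ip u (v + w) = ip u v + ip u w)
    (hipsmull : ∀ (z : ℂ) u w, ip (z • u) w = starRingEnd ℂ z * ip u w)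
    (hipsmulr : ∀ (z : ℂ) u w, ip u (z • w) = z * ip u w) :
    -- π := π₁ ⊗ π₂
    letI π : TensorProduct ℂ A B →ₗ[ℂ]
        (TensorProduct ℂ D₁ D₂ →ₗ[ℂ] TensorProduct ℂ H₁ H₂) :=
      TensorProduct.lift ((TensorProduct.mapBilinear (σ₁₂ := RingHom.id ℂ) (M := D₁) (N := D₂) (M₂ := H₁) (N₂ := H₂)).compl₁₂ π₁ π₂)
    letI inc : TensorProduct ℂ D₁ D₂ →ₗ[ℂ] TensorProduct ℂ H₁ H₂ :=
      TensorProduct.map D₁.subtype D₂.subtype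
    -- π(a ⊗ b)(ξ ⊗ η) = π₁(a)ξ ⊗ π₂(b)η
    ((∀ (a : A) (b : B) (ξ : D₁) (η : D₂),
        π (a ⊗ₜ[ℂ] b) (ξ ⊗ₜ[ℂ] η) = π₁ a ξ ⊗ₜ[ℂ] π₂ b η) ∧
    -- uniqueness
    (∀ π' : TensorProduct ℂ A B →ₗ[ℂ]
        (TensorProduct ℂ D₁ D₂ →ₗ[ℂ] TensorProduct ℂ H₁ H₂),
      (∀ (a : A) (b : B) (ξ : D₁) (η : D₂),
        π' (a ⊗ₜ[ℂ] b) (ξ ⊗ₜ[ℂ] η) = π₁ a ξ ⊗ₜ[ℂ] π₂ b η) → π' = π) ∧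
    -- π(c*) = π(c)†
    (∀ (c : TensorProduct ℂ A B) (Ξ Θ : TensorProduct ℂ D₁ D₂),
      ip (π c Ξ) (inc Θ) = ip (inc Ξ) (π (S c) Θ)) ∧
    -- π(cz) = π(c) □ π(z)
    (∀ (c : TensorProduct ℂ A B) (z : TensorProduct ℂ A₀ B₀)
        (Ξ Θ : TensorProduct ℂ D₁ D₂),
      ip (π (R z c) Ξ) (inc Θ)
        = ip (π (TensorProduct.map ιA ιB z) Ξ) (π (S c) Θ))) :=
  stmt12_general H₁ H₂ D₁ D₂ A A₀ B B₀ ιA ιB rA rB π₁ π₂ hπ₁star hπ₁mult hπ₂star hπ₂mult R hR S hS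
    hSadd ip hip hipaddl hipaddr
end

section
/- Let Ω be a continuous representable linear functional on the tensor product Banach quasi *-algebra (𝔄 ⊗̂_n 𝔅, 𝔄₀ ⊗ 𝔅₀) with units. Then ω₁(a) := Ω(a ⊗ e_𝔅) and ω₂(b) := Ω(e_𝔄 ⊗ b) are continuous representable linear functionals on (𝔄, 𝔄₀) and (𝔅, 𝔅₀) respectively. -/
open scoped TensorProduct ComplexOrder

/-- Let `Ω` be a continuous representable linear functional on the tensor
product Banach quasi *-algebra `(𝔄 ⊗̂ₙ 𝔅, 𝔄₀ ⊗ 𝔅₀)` with units. Then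
`ω₁(a) := Ω(a ⊗ e_𝔅)` and `ω₂(b) := Ω(e_𝔄 ⊗ b)` are continuous representable linear
functionals on `(𝔄, 𝔄₀)` and `(𝔅, 𝔅₀)` respectively. -/
theorem stmt14
    (A A₀ B B₀ : Type*)
    [NormedAddCommGroup A] [NormedSpace ℂ A] [StarAddMonoid A] [StarModule ℂ A]
    [NormedAddCommGroup B] [NormedSpace ℂ B] [StarAddMonoid B] [StarModule ℂ B]
    [CompleteSpace A] [CompleteSpace B]
    [Ring A₀] [Algebra ℂ A₀] [StarRing A₀] [StarModule ℂ A₀]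
    [Ring B₀] [Algebra ℂ B₀] [StarRing B₀] [StarModule ℂ B₀]
    (ιA : A₀ →ₗ[ℂ] A) (ιB : B₀ →ₗ[ℂ] B)
    (hιAstar : ∀ x : A₀, ιA (star x) = star (ιA x))
    (hιBstar : ∀ y : B₀, ιB (star y) = star (ιB y))
    (lA rA : A₀ →ₗ[ℂ] A →ₗ[ℂ] A) (lB rB : B₀ →ₗ[ℂ] B →ₗ[ℂ] B)
    (hιAmul : ∀ x y : A₀, lA x (ιA y) = ιA (x * y) ∧ rA y (ιA x) = ιA (x * y))
    (hιBmul : ∀ x y : B₀, lB x (ιB y) = ιB (x * y) ∧ rB y (ιB x) = ιB (x * y))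
    (hunitA : ∀ a : A, lA 1 a = a ∧ rA 1 a = a)
    (hunitB : ∀ b : B, lB 1 b = b ∧ rB 1 b = b)
    -- tensor product quasi *-algebra structure
    (L R : TensorProduct ℂ A₀ B₀ →ₗ[ℂ] TensorProduct ℂ A B →ₗ[ℂ] TensorProduct ℂ A B)
    (hL : ∀ (x : A₀) (y : B₀) (a : A) (b : B),
      L (x ⊗ₜ[ℂ] y) (a ⊗ₜ[ℂ] b) = lA x a ⊗ₜ[ℂ] lB y b)
    (hR : ∀ (x : A₀) (y : B₀) (a : A) (b : B),
      R (x ⊗ₜ[ℂ] y) (a ⊗ₜ[ℂ] b) = rA x a ⊗ₜ[ℂ] rB y b)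
    (S : TensorProduct ℂ A B → TensorProduct ℂ A B)
    (hS : ∀ (a : A) (b : B), S (a ⊗ₜ[ℂ] b) = star a ⊗ₜ[ℂ] star b)
    (S₀ : TensorProduct ℂ A₀ B₀ → TensorProduct ℂ A₀ B₀)
    (hS₀ : ∀ (x : A₀) (y : B₀), S₀ (x ⊗ₜ[ℂ] y) = star x ⊗ₜ[ℂ] star y)
    -- the uniform cross-norm n̄
    (N : TensorProduct ℂ A B → ℝ)
    (hcross : ∀ (a : A) (b : B), N (a ⊗ₜ[ℂ] b) = ‖a‖ * ‖b‖)
    -- Ω : continuous representable linear functional on 𝔄 ⊗ₙ 𝔅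
    (Ω : TensorProduct ℂ A B →ₗ[ℂ] ℂ)
    (hΩcont : ∃ C : ℝ, ∀ c, ‖Ω c‖ ≤ C * N c)
    (hΩL1 : ∀ z : TensorProduct ℂ A₀ B₀,
      0 ≤ Ω (TensorProduct.map ιA ιB (S₀ z * z)))
    (hΩL2 : ∀ (z w : TensorProduct ℂ A₀ B₀) (c : TensorProduct ℂ A B),
      Ω (L (S₀ w) (R z (S c))) = starRingEnd ℂ (Ω (L (S₀ z) (R w c))))
    (hΩL3 : ∀ c : TensorProduct ℂ A B, ∃ γ : ℝ, 0 < γ ∧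
      ∀ z : TensorProduct ℂ A₀ B₀,
        ‖Ω (R z (S c))‖ ≤ γ * Real.sqrt (Ω (TensorProduct.map ιA ιB (S₀ z * z))).re) :
    -- ω₁ := Ω(· ⊗ e_𝔅) is continuous and representable on (𝔄, 𝔄₀)
    ((∃ C : ℝ, ∀ a : A, ‖Ω (a ⊗ₜ[ℂ] ιB 1)‖ ≤ C * ‖a‖) ∧
      (∀ x : A₀, 0 ≤ Ω (ιA (star x * x) ⊗ₜ[ℂ] ιB 1)) ∧
      (∀ (x y : A₀) (a : A),
        Ω (lA (star y) (rA x (star a)) ⊗ₜ[ℂ] ιB 1)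
          = starRingEnd ℂ (Ω (lA (star x) (rA y a) ⊗ₜ[ℂ] ιB 1))) ∧
      (∀ a : A, ∃ γ : ℝ, 0 < γ ∧ ∀ x : A₀,
        ‖Ω (rA x (star a) ⊗ₜ[ℂ] ιB 1)‖
          ≤ γ * Real.sqrt (Ω (ιA (star x * x) ⊗ₜ[ℂ] ιB 1)).re)) ∧
    -- ω₂ := Ω(e_𝔄 ⊗ ·) is continuous and representable on (𝔅, 𝔅₀)
    ((∃ C : ℝ, ∀ b : B, ‖Ω (ιA 1 ⊗ₜ[ℂ] b)‖ ≤ C * ‖b‖) ∧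
      (∀ y : B₀, 0 ≤ Ω (ιA 1 ⊗ₜ[ℂ] ιB (star y * y))) ∧
      (∀ (x y : B₀) (b : B),
        Ω (ιA 1 ⊗ₜ[ℂ] lB (star y) (rB x (star b)))
          = starRingEnd ℂ (Ω (ιA 1 ⊗ₜ[ℂ] lB (star x) (rB y b)))) ∧
      (∀ b : B, ∃ γ : ℝ, 0 < γ ∧ ∀ y : B₀,
        ‖Ω (ιA 1 ⊗ₜ[ℂ] rB y (star b))‖
          ≤ γ * Real.sqrt (Ω (ιA 1 ⊗ₜ[ℂ] ιB (star y * y))).re)) := by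
  obtain ⟨C, hC⟩ := hΩcont
  refine ⟨⟨⟨C * ‖ιB 1‖, fun a => ?_⟩, fun x => ?_, fun x y a => ?_, fun a => ?_⟩,
          ⟨⟨C * ‖ιA 1‖, fun b => ?_⟩, fun y => ?_, fun x y b => ?_, fun b => ?_⟩⟩
  · calc ‖Ω (a ⊗ₜ[ℂ] ιB 1)‖ ≤ C * N (a ⊗ₜ[ℂ] ιB 1) := hC _
      _ = C * ‖ιB 1‖ * ‖a‖ := by rw [hcross]; ring
  · have h := hΩL1 (x ⊗ₜ[ℂ] (1 : B₀))
    simpa [hS₀, Algebra.TensorProduct.tmul_mul_tmul, TensorProduct.map_tmul] using h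
  · have h := hΩL2 (x ⊗ₜ[ℂ] (1 : B₀)) (y ⊗ₜ[ℂ] (1 : B₀)) (a ⊗ₜ[ℂ] ιB 1)
    have hB1 : star (ιB (1 : B₀)) = ιB 1 := by rw [← hιBstar, star_one]
    simpa [hS₀, hS, hR, hL, hB1, (hunitB _).1, (hunitB _).2] using h
  · obtain ⟨γ, hγ, hγ2⟩ := hΩL3 (a ⊗ₜ[ℂ] ιB 1)
    refine ⟨γ, hγ, fun x => ?_⟩
    have h := hγ2 (x ⊗ₜ[ℂ] (1 : B₀))
    have hB1 : star (ιB (1 : B₀)) = ιB 1 := by rw [← hιBstar, star_one]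
    simpa [hS₀, hS, hR, hB1, (hunitB _).2, Algebra.TensorProduct.tmul_mul_tmul,
      TensorProduct.map_tmul] using h
  · calc ‖Ω (ιA 1 ⊗ₜ[ℂ] b)‖ ≤ C * N (ιA 1 ⊗ₜ[ℂ] b) := hC _
      _ = C * ‖ιA 1‖ * ‖b‖ := by rw [hcross]; ring
  · have h := hΩL1 ((1 : A₀) ⊗ₜ[ℂ] y)
    simpa [hS₀, Algebra.TensorProduct.tmul_mul_tmul, TensorProduct.map_tmul] using h
  · have h := hΩL2 ((1 : A₀) ⊗ₜ[ℂ] x) ((1 : A₀) ⊗ₜ[ℂ] y) (ιA 1 ⊗ₜ[ℂ] b)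
    have hA1 : star (ιA (1 : A₀)) = ιA 1 := by rw [← hιAstar, star_one]
    simpa [hS₀, hS, hR, hL, hA1, (hunitA _).1, (hunitA _).2] using h
  · obtain ⟨γ, hγ, hγ2⟩ := hΩL3 (ιA 1 ⊗ₜ[ℂ] b)
    refine ⟨γ, hγ, fun y => ?_⟩
    have h := hγ2 ((1 : A₀) ⊗ₜ[ℂ] y)
    have hA1 : star (ιA (1 : A₀)) = ιA 1 := by rw [← hιAstar, star_one]
    simpa [hS₀, hS, hR, hA1, (hunitA _).2, Algebra.TensorProduct.tmul_mul_tmul,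
      TensorProduct.map_tmul] using h
end

section
/- Let Ω be a continuous representable linear functional on 𝔄 ⊗_n 𝔅 with GNS representation π_Ω and cyclic vector ξ_Ω, and define φ_Ω(c, c') := ⟨π_Ω(c)ξ_Ω, π_Ω(c')ξ_Ω⟩. Then φ_Ω is a closed sesquilinear form on 𝔄 ⊗_n 𝔅: whenever v_n → v in ‖·‖_n̄ and φ_Ω(v_n − v_m, v_n − v_m) → 0 as n, m → ∞, one has φ_Ω(v_n − v, v_n − v) → 0. -/
open scoped TensorProduct
open Filter

/-! The vectors `π(vₙ)ξ_Ω` form a Cauchy sequence in the Hilbert space, since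
`φ_Ω(vₙ − vₘ, vₙ − vₘ) = ‖π(vₙ)ξ_Ω − π(vₘ)ξ_Ω‖²`, so they converge in norm to some `x`.
Norm convergence implies weak convergence, while weak continuity of `π` makes `π(vₙ)ξ_Ω`
converge weakly to `π(v)ξ_Ω` against the dense domain; hence `x = π(v)ξ_Ω`, and
`φ_Ω(vₙ − v, vₙ − v) = ‖π(vₙ)ξ_Ω − x‖² → 0`. -/

section InnerProductSpace

variable {𝕜 E : Type*} [RCLike 𝕜] [NormedAddCommGroup E] [InnerProductSpace 𝕜 E]

theorem cauchySeq_of_norm_inner_self_sub_lt {x : ℕ → E}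
    (h : ∀ ε : ℝ, 0 < ε → ∃ M : ℕ, ∀ n ≥ M, ∀ m ≥ M, ‖(inner 𝕜 (x n - x m) (x n - x m) : 𝕜)‖ < ε) :
    CauchySeq x := by
  rw [Metric.cauchySeq_iff]
  intro ε hε
  obtain ⟨M, hM⟩ := h (ε ^ 2) (by positivity)
  refine ⟨M, fun n hn m hm => ?_⟩
  have hsq : ‖x n - x m‖ ^ 2 < ε ^ 2 := by
    simpa only [inner_self_eq_norm_sq_to_K, norm_pow, RCLike.norm_ofReal, abs_norm] using hM n hn m hm
  rw [dist_eq_norm]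
  exact lt_of_pow_lt_pow_left₀ 2 hε.le hsq

theorem tendsto_of_cauchySeq_of_tendsto_inner_of_dense [CompleteSpace E] {S : Set E}
    (hS : Dense S) {x : ℕ → E} {y : E} (hx : CauchySeq x)
    (hweak : ∀ η ∈ S, Tendsto (fun n => (inner 𝕜 (x n) η : 𝕜)) atTop (nhds (inner 𝕜 y η))) :
    Tendsto x atTop (nhds y) := by
  obtain ⟨z, hz⟩ := cauchySeq_tendsto_of_complete hx
  suffices z = y from this ▸ hz
  refine hS.eq_of_inner_left 𝕜 fun η hη => ?_
  exact tendsto_nhds_unique (hz.inner tendsto_const_nhds) (hweak η hη)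

theorem tendsto_inner_self_sub_zero {x : ℕ → E} {y : E} (hx : Tendsto x atTop (nhds y)) :
    Tendsto (fun n => (inner 𝕜 (x n - y) (x n - y) : 𝕜)) atTop (nhds 0) := by
  have hsub : Tendsto (fun n => x n - y) atTop (nhds 0) := by
    simpa only [sub_self] using hx.sub_const y
  simpa only [inner_zero_left] using hsub.inner hsub

end InnerProductSpace

theorem stmt16_general
    (H : Type*) [NormedAddCommGroup H] [InnerProductSpace ℂ H] [CompleteSpace H]
    (D : Submodule ℂ H) (hD : Dense (D : Set H))
    (A B : Type*)
    [NormedAddCommGroup A] [NormedSpace ℂ A]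
    [NormedAddCommGroup B] [NormedSpace ℂ B]
    -- the cross-norm n̄ on 𝔄 ⊗ 𝔅
    (N : TensorProduct ℂ A B → ℝ)
    -- the GNS representation π_Ω of Ω, weakly continuous, with cyclic vector ξΩ
    (π : TensorProduct ℂ A B →ₗ[ℂ] (D →ₗ[ℂ] H))
    (hπcont : ∀ (c : ℕ → TensorProduct ℂ A B) (c₀ : TensorProduct ℂ A B),
      Tendsto (fun n => N (c n - c₀)) atTop (nhds 0) →
      ∀ ξ η : D, Tendsto (fun n => (inner ℂ (π (c n) ξ) (η : H) : ℂ)) atTop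
        (nhds (inner ℂ (π c₀ ξ) (η : H))))
    (ξΩ : D) :
    -- φ_Ω(c, c') := ⟨π(c)ξΩ, π(c')ξΩ⟩ is closed:
    ∀ (v : ℕ → TensorProduct ℂ A B) (v₀ : TensorProduct ℂ A B),
      Tendsto (fun n => N (v n - v₀)) atTop (nhds 0) →
      (∀ ε : ℝ, 0 < ε → ∃ M : ℕ, ∀ n ≥ M, ∀ m ≥ M,
        ‖(inner ℂ (π (v n - v m) ξΩ) (π (v n - v m) ξΩ) : ℂ)‖ < ε) →
      Tendsto (fun n => (inner ℂ (π (v n - v₀) ξΩ) (π (v n - v₀) ξΩ) : ℂ))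
        atTop (nhds 0) := by
  intro v v₀ hconv hcauchy
  have hcau : CauchySeq fun n => π (v n) ξΩ := by
    refine cauchySeq_of_norm_inner_self_sub_lt (𝕜 := ℂ) ?_
    simpa only [map_sub, LinearMap.sub_apply, Submodule.coe_sub] using hcauchy
  have hlim : Tendsto (fun n => (π (v n) ξΩ : H)) atTop (nhds (π v₀ ξΩ)) :=
    tendsto_of_cauchySeq_of_tendsto_inner_of_dense hD hcau
      fun η hη => hπcont v v₀ hconv ξΩ ⟨η, hη⟩
  simpa only [map_sub, LinearMap.sub_apply] using tendsto_inner_self_sub_zero (𝕜 := ℂ) hlim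

/-- Let `Ω` be a continuous representable linear functional on `𝔄 ⊗ₙ 𝔅`
with GNS representation `π_Ω` (weakly continuous, with dense domain `D ⊂ H`) and cyclic
vector `ξ_Ω`, and let `φ_Ω(c, c') := ⟨π_Ω(c)ξ_Ω, π_Ω(c')ξ_Ω⟩`. Then `φ_Ω` is a closed
sesquilinear form on `𝔄 ⊗ₙ 𝔅`: whenever `vₙ → v` in `‖·‖_n̄` and
`φ_Ω(vₙ − vₘ, vₙ − vₘ) → 0` as `n, m → ∞`, one has `φ_Ω(vₙ − v, vₙ − v) → 0`. -/
theorem stmt16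
    (H : Type*) [NormedAddCommGroup H] [InnerProductSpace ℂ H] [CompleteSpace H]
    (D : Submodule ℂ H) (hD : Dense (D : Set H))
    (A B : Type*)
    [NormedAddCommGroup A] [NormedSpace ℂ A] [CompleteSpace A]
    [NormedAddCommGroup B] [NormedSpace ℂ B] [CompleteSpace B]
    -- the cross-norm n̄ on 𝔄 ⊗ 𝔅
    (N : TensorProduct ℂ A B → ℝ)
    (hN0 : ∀ z, 0 ≤ N z)
    (hNadd : ∀ z w, N (z + w) ≤ N z + N w)
    (hNsmul : ∀ (c : ℂ) z, N (c • z) = ‖c‖ * N z)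
    (hcross : ∀ (a : A) (b : B), N (a ⊗ₜ[ℂ] b) = ‖a‖ * ‖b‖)
    -- the GNS representation π_Ω of Ω, weakly continuous, with cyclic vector ξΩ
    (π : TensorProduct ℂ A B →ₗ[ℂ] (D →ₗ[ℂ] H))
    (hπcont : ∀ (c : ℕ → TensorProduct ℂ A B) (c₀ : TensorProduct ℂ A B),
      Tendsto (fun n => N (c n - c₀)) atTop (nhds 0) →
      ∀ ξ η : D, Tendsto (fun n => (inner ℂ (π (c n) ξ) (η : H) : ℂ)) atTop
        (nhds (inner ℂ (π c₀ ξ) (η : H))))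
    (ξΩ : D)
    (Ω : TensorProduct ℂ A B → ℂ)
    (hΩ : ∀ c, Ω c = inner ℂ (π c ξΩ) (ξΩ : H)) :
    -- φ_Ω(c, c') := ⟨π(c)ξΩ, π(c')ξΩ⟩ is closed:
    ∀ (v : ℕ → TensorProduct ℂ A B) (v₀ : TensorProduct ℂ A B),
      Tendsto (fun n => N (v n - v₀)) atTop (nhds 0) →
      (∀ ε : ℝ, 0 < ε → ∃ M : ℕ, ∀ n ≥ M, ∀ m ≥ M,
        ‖(inner ℂ (π (v n - v m) ξΩ) (π (v n - v m) ξΩ) : ℂ)‖ < ε) →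
      Tendsto (fun n => (inner ℂ (π (v n - v₀) ξΩ) (π (v n - v₀) ξΩ) : ℂ))
        atTop (nhds 0) :=
  stmt16_general H D hD A B N π hπcont ξΩ
end

section
/- Let X be a barrelled normed space, Y a Banach space containing X with a second (possibly stronger) norm structure, and φ a closed nonnegative sesquilinear form defined everywhere on X × X. Then φ is bounded: there exists γ ≥ 0 with φ(c, c) ≤ γ²‖c‖² for all c ∈ X. (In the paper: the identity map j : 𝔄 ⊗_n 𝔅 → completion of 𝔄 ⊗ 𝔅 under ‖c‖_{φ_Ω} = √(‖c‖_n̄² + φ_Ω(c, c)) is closed, hence continuous by the closed graph theorem for maps from barrelled spaces to Pták spaces, which yields φ_Ω(c, c) ≤ γ²‖c‖_n̄².) -/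
open scoped ComplexOrder
open Filter

/-!
`p c = √(re φ(c, c))` is a seminorm satisfying the parallelogram law. In a barrelled space it is
continuous, hence bounded by a multiple of the norm, as soon as it is lower semicontinuous, i.e. as
soon as `x n → x₀` and `p (x n) ≤ t` force `p x₀ ≤ t`. By the parallelogram law, almost-minimisers
of `p` on the tails `convexHull (x '' Ici m)` form a `p`-Cauchy sequence; it still converges to
`x₀` in norm, so closedness of `φ` makes it converge to `x₀` for `p` too, and `p x₀ ≤ t` follows.
-/

open Topology

namespace PreInnerProductSpace.Core

variable {𝕜 F : Type*} [RCLike 𝕜] [AddCommGroup F] [Module 𝕜 F]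

noncomputable def seminorm (c : PreInnerProductSpace.Core 𝕜 F) : Seminorm 𝕜 F :=
  letI := InnerProductSpace.Core.toSeminormedAddCommGroup (c := c)
  letI := InnerProductSpace.Core.toNormedSpace (c := c)
  normSeminorm 𝕜 F

variable (c : PreInnerProductSpace.Core 𝕜 F)

theorem seminorm_sq_eq_re_inner (x : F) : c.seminorm x ^ 2 = RCLike.re (c.inner x x) :=
  Real.sq_sqrt (c.re_inner_nonneg x)

theorem parallelogram_law_seminorm (x y : F) :
    c.seminorm (x + y) ^ 2 + c.seminorm (x - y) ^ 2 = 2 * (c.seminorm x ^ 2 + c.seminorm y ^ 2) :=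
  letI := InnerProductSpace.Core.toSeminormedAddCommGroup (c := c)
  letI := InnerProductSpace.ofCore c
  parallelogram_law_with_norm 𝕜 x y

end PreInnerProductSpace.Core

theorem tendsto_of_mem_convexHull_image_Ici {E : Type*} [SeminormedAddCommGroup E]
    [NormedSpace ℝ E] {x : ℕ → E} {x₀ : E} (hx : Tendsto x atTop (𝓝 x₀)) {u : ℕ → E}
    (hu : ∀ m, u m ∈ convexHull ℝ (x '' Set.Ici m)) : Tendsto u atTop (𝓝 x₀) := by
  rw [Metric.tendsto_atTop] at hx ⊢
  intro ε hε
  obtain ⟨N, hN⟩ := hx (ε / 2) (half_pos hε)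
  refine ⟨N, fun m hm => ?_⟩
  have hball : convexHull ℝ (x '' Set.Ici m) ⊆ Metric.closedBall x₀ (ε / 2) := by
    refine convexHull_min ?_ (convex_closedBall x₀ _)
    rintro _ ⟨n, hn, rfl⟩
    exact (hN n (hm.trans hn)).le
  exact (hball (hu m)).trans_lt (half_lt_self hε)

namespace Seminorm

variable {E : Type*}

theorem sq_sub_le_of_mem_convex [AddCommGroup E] [Module ℝ E] (p : Seminorm ℝ E)
    (hpar : ∀ x y, p (x + y) ^ 2 + p (x - y) ^ 2 = 2 * (p x ^ 2 + p y ^ 2))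
    {K : Set E} (hK : Convex ℝ K) {A : ℝ} (hA : ∀ z ∈ K, A ≤ p z ^ 2) {x y : E}
    (hx : x ∈ K) (hy : y ∈ K) :
    p (x - y) ^ 2 ≤ 2 * p x ^ 2 + 2 * p y ^ 2 - 4 * A := by
  have hmid : A ≤ p ((1 / 2 : ℝ) • (x + y)) ^ 2 :=
    hA _ (by simpa only [smul_add] using hK hx hy (by norm_num) (by norm_num) (by norm_num))
  rw [map_smul_eq_mul, Real.norm_of_nonneg (by norm_num)] at hmid
  linarith [hpar x y]

theorem exists_cauchy_of_antitone_convex [AddCommGroup E] [Module ℝ E] (p : Seminorm ℝ E)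
    (hpar : ∀ x y, p (x + y) ^ 2 + p (x - y) ^ 2 = 2 * (p x ^ 2 + p y ^ 2))
    {K : ℕ → Set E} (hK : Antitone K) (hconv : ∀ m, Convex ℝ (K m))
    (hne : ∀ m, (K m).Nonempty) {t : ℝ} (ht : ∀ z ∈ K 0, p z ≤ t) :
    ∃ u : ℕ → E, (∀ m, u m ∈ K m) ∧
      ∀ ε > 0, ∃ M, ∀ n ≥ M, ∀ m ≥ M, p (u n - u m) < ε := by
  set A : ℕ → ℝ := fun m => sInf ((fun z => p z ^ 2) '' K m)
  have hbdd : ∀ m, BddBelow ((fun z => p z ^ 2) '' K m) :=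
    fun m => ⟨0, by rintro _ ⟨z, -, rfl⟩; positivity⟩
  have hA_le : ∀ m, ∀ z ∈ K m, A m ≤ p z ^ 2 :=
    fun m z hz => csInf_le (hbdd m) (Set.mem_image_of_mem _ hz)
  have hA_mono : Monotone A := fun m k hmk =>
    csInf_le_csInf (hbdd m) ((hne k).image _) (Set.image_mono (hK hmk))
  have hA_bdd : BddAbove (Set.range A) := by
    refine ⟨t ^ 2, ?_⟩
    rintro _ ⟨m, rfl⟩
    obtain ⟨z, hz⟩ := hne m
    exact (hA_le m z hz).trans
      (pow_le_pow_left₀ (apply_nonneg p z) (ht z (hK (Nat.zero_le m) hz)) 2)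
  set a := ⨆ m, A m
  have hA_tendsto : Tendsto A atTop (𝓝 a) := tendsto_atTop_ciSup hA_mono hA_bdd
  have hu : ∀ m : ℕ, ∃ u ∈ K m, p u ^ 2 < a + 1 / (m + 1) := by
    intro m
    have hlt : A m < a + 1 / (m + 1) := by
      have := le_ciSup hA_bdd m
      have : (0 : ℝ) < 1 / (m + 1) := by positivity
      linarith
    obtain ⟨_, ⟨u, hu, rfl⟩, hlt⟩ := exists_lt_of_csInf_lt ((hne m).image _) hlt
    exact ⟨u, hu, hlt⟩
  choose u huK hu using hu
  refine ⟨u, huK, fun ε hε => ?_⟩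
  -- For `n, m ≥ M`, `p (u n - u m) ^ 2 ≤ 2 p (u n) ^ 2 + 2 p (u m) ^ 2 - 4 A M` is below this gap.
  have hgap : Tendsto (fun M : ℕ => 4 * (a - A M) + 4 * (1 / ((M : ℝ) + 1))) atTop (𝓝 0) := by
    simpa using (((tendsto_const_nhds (x := a)).sub hA_tendsto).const_mul 4).add
      (tendsto_one_div_add_atTop_nhds_zero_nat.const_mul 4)
  obtain ⟨M, hM⟩ := (hgap.eventually (gt_mem_nhds (pow_pos hε 2))).exists
  refine ⟨M, fun n hn m hm => ?_⟩
  have hδ : ∀ k ≥ M, 1 / ((k : ℝ) + 1) ≤ 1 / ((M : ℝ) + 1) := fun k hk =>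
    one_div_le_one_div_of_le (by positivity) (by exact_mod_cast Nat.add_le_add_right hk 1)
  have hsq : p (u n - u m) ^ 2 < ε ^ 2 := by
    have := sq_sub_le_of_mem_convex p hpar (hconv M) (hA_le M) (hK hn (huK n)) (hK hm (huK m))
    linarith [hu n, hu m, hδ n hn, hδ m hm]
  exact lt_of_pow_lt_pow_left₀ 2 hε.le hsq

theorem lowerSemicontinuous_of_closed [SeminormedAddCommGroup E] [NormedSpace ℝ E]
    (p : Seminorm ℝ E)
    (hpar : ∀ x y, p (x + y) ^ 2 + p (x - y) ^ 2 = 2 * (p x ^ 2 + p y ^ 2))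
    (hclosed : ∀ (v : ℕ → E) (v₀ : E), Tendsto v atTop (𝓝 v₀) →
      (∀ ε > 0, ∃ M, ∀ n ≥ M, ∀ m ≥ M, p (v n - v m) < ε) →
      Tendsto (fun n => p (v n - v₀)) atTop (𝓝 0)) :
    LowerSemicontinuous p := by
  refine lowerSemicontinuous_iff_isClosed_preimage.2 fun t => IsSeqClosed.isClosed ?_
  intro x x₀ hxt hx
  set K : ℕ → Set E := fun m => convexHull ℝ (x '' Set.Ici m)
  have hKt : ∀ z ∈ K 0, p z ≤ t := by
    refine fun z hz => (convexHull_min ?_ (p.convexOn.convex_le t) hz).2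
    rintro _ ⟨n, -, rfl⟩
    exact ⟨Set.mem_univ _, hxt n⟩
  have hK : Antitone K := fun m k hmk =>
    convexHull_mono (Set.image_mono (Set.Ici_subset_Ici.2 hmk))
  obtain ⟨u, huK, hcauchy⟩ := p.exists_cauchy_of_antitone_convex hpar hK
    (fun m => convex_convexHull ℝ _)
    (fun m => ⟨x m, subset_convexHull ℝ _ ⟨m, Set.self_mem_Ici, rfl⟩⟩) hKt
  have hu : Tendsto (fun m => p (u m - x₀)) atTop (𝓝 0) :=
    hclosed u x₀ (tendsto_of_mem_convexHull_image_Ici hx huK) hcauchy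
  refine le_of_tendsto_of_tendsto' tendsto_const_nhds (by simpa using hu.const_add t) fun m => ?_
  calc p x₀ ≤ p (u m) + p (u m - x₀) := by
        rw [← map_sub_rev p]; exact le_map_add_map_sub p x₀ (u m)
    _ ≤ t + p (u m - x₀) := by gcongr; exact hKt _ (hK (Nat.zero_le m) (huK m))

end Seminorm

section SesqForm

variable {X : Type*} [AddCommGroup X] [Module ℂ X] {φ : X → X → ℂ}

theorem conj_apply_swap_of_nonneg
    (haddl : ∀ a a' b, φ (a + a') b = φ a b + φ a' b)
    (haddr : ∀ a b b', φ a (b + b') = φ a b + φ a b')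
    (hsmull : ∀ (z : ℂ) a b, φ (z • a) b = starRingEnd ℂ z * φ a b)
    (hsmulr : ∀ (z : ℂ) a b, φ a (z • b) = z * φ a b)
    (hpos : ∀ c, 0 ≤ φ c c) (x y : X) :
    starRingEnd ℂ (φ y x) = φ x y := by
  have him : ∀ c, (φ c c).im = 0 := fun c => (Complex.nonneg_iff.1 (hpos c)).2.symm
  have h₁ : (φ x y).im + (φ y x).im = 0 := by
    simpa [haddl, haddr, him x, him y] using him (x + y)
  have h₂ : (φ x y).re + -(φ y x).re = 0 := by
    simpa [haddl, haddr, hsmull, hsmulr, him x, him y] using him (x + Complex.I • y)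
  apply Complex.ext <;> simp only [Complex.conj_re, Complex.conj_im] <;> linarith

abbrev preInnerCoreOfNonneg
    (haddl : ∀ a a' b, φ (a + a') b = φ a b + φ a' b)
    (haddr : ∀ a b b', φ a (b + b') = φ a b + φ a b')
    (hsmull : ∀ (z : ℂ) a b, φ (z • a) b = starRingEnd ℂ z * φ a b)
    (hsmulr : ∀ (z : ℂ) a b, φ a (z • b) = z * φ a b)
    (hpos : ∀ c, 0 ≤ φ c c) : PreInnerProductSpace.Core ℂ X where
  inner := φ
  conj_inner_symm := conj_apply_swap_of_nonneg haddl haddr hsmull hsmulr hpos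
  re_inner_nonneg c := (Complex.nonneg_iff.1 (hpos c)).1
  add_left := haddl
  smul_left x y z := hsmull z x y

end SesqForm

/-- Let `X` be a barrelled normed space and `φ` a closed nonnegative
sesquilinear form defined everywhere on `X × X`. Then `φ` is bounded: there is `γ ≥ 0`
with `φ(c, c) ≤ γ²·‖c‖²` for all `c ∈ X`. (In the paper: the identity map
`j : 𝔄 ⊗ₙ 𝔅 → (𝔄 ⊗ 𝔅, ‖·‖_{φ_Ω})^` is closed, hence continuous by the closed graph
theorem for maps from barrelled spaces to Pták spaces, which yields
`φ_Ω(c, c) ≤ γ²‖c‖_n̄²`.) -/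
theorem stmt17
    (X : Type*) [NormedAddCommGroup X] [NormedSpace ℂ X] [BarrelledSpace ℂ X]
    (φ : X → X → ℂ)
    -- sesquilinearity
    (haddl : ∀ a a' b, φ (a + a') b = φ a b + φ a' b)
    (haddr : ∀ a b b', φ a (b + b') = φ a b + φ a b')
    (hsmull : ∀ (z : ℂ) a b, φ (z • a) b = starRingEnd ℂ z * φ a b)
    (hsmulr : ∀ (z : ℂ) a b, φ a (z • b) = z * φ a b)
    -- nonnegativity
    (hpos : ∀ c, 0 ≤ φ c c)
    -- closedness
    (hclosed : ∀ (v : ℕ → X) (v₀ : X),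
      Tendsto (fun n => ‖v n - v₀‖) atTop (nhds 0) →
      (∀ ε : ℝ, 0 < ε → ∃ M : ℕ, ∀ n ≥ M, ∀ m ≥ M,
        ‖φ (v n - v m) (v n - v m)‖ < ε) →
      Tendsto (fun n => φ (v n - v₀) (v n - v₀)) atTop (nhds 0)) :
    ∃ γ : ℝ, 0 ≤ γ ∧ ∀ c : X, (φ c c).re ≤ γ ^ 2 * ‖c‖ ^ 2 := by
  set c := preInnerCoreOfNonneg haddl haddr hsmull hsmulr hpos
  set p := c.seminorm
  have hsq : ∀ x, p x ^ 2 = ‖φ x x‖ := fun x =>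
    Complex.re_eq_norm.2 (hpos x) ▸ c.seminorm_sq_eq_re_inner x
  have hp_closed : ∀ (v : ℕ → X) (v₀ : X), Tendsto v atTop (𝓝 v₀) →
      (∀ ε > 0, ∃ M, ∀ n ≥ M, ∀ m ≥ M, p (v n - v m) < ε) →
      Tendsto (fun n => p (v n - v₀)) atTop (𝓝 0) := by
    intro v v₀ hv hcauchy
    have hφ := hclosed v v₀ (tendsto_iff_norm_sub_tendsto_zero.1 hv) fun ε hε => by
      obtain ⟨M, hM⟩ := hcauchy (√ε) (Real.sqrt_pos.2 hε)
      exact ⟨M, fun n hn m hm =>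
        hsq (v n - v m) ▸ (Real.lt_sqrt (apply_nonneg p _)).1 (hM n hn m hm)⟩
    have hp : ∀ x, p x = √‖φ x x‖ := fun x => by rw [← hsq, Real.sqrt_sq (apply_nonneg p x)]
    simpa [hp] using hφ.norm.sqrt
  have hlsc := (p.restrictScalars ℝ).lowerSemicontinuous_of_closed
    c.parallelogram_law_seminorm hp_closed
  obtain ⟨C, hC, hbound⟩ :=
    p.bound_of_continuous_normedSpace (p.continuous_of_lowerSemicontinuous hlsc)
  refine ⟨C, hC.le, fun x => ?_⟩
  rw [Complex.re_eq_norm.2 (hpos x), ← hsq, ← mul_pow]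
  exact pow_le_pow_left₀ (apply_nonneg p x) (hbound x) 2
end

section
/- Let ω ∈ R_c(𝔄, 𝔄₀) be a continuous representable linear functional on a normed quasi *-algebra and x ∈ 𝔄₀. Then the functional ω_x(a) := ω(x*ax) is also a continuous representable linear functional on (𝔄, 𝔄₀). -/
open scoped ComplexOrder

/-- Let `ω ∈ R_c(𝔄, 𝔄₀)` be a continuous representable linear functional
on a normed quasi *-algebra `(𝔄[‖·‖], 𝔄₀)` and `x ∈ 𝔄₀`. Then `ω_x(a) := ω(x* a x)` is
also a continuous representable linear functional on `(𝔄, 𝔄₀)`. -/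
theorem stmt19
    (A A₀ : Type*)
    [NormedAddCommGroup A] [NormedSpace ℂ A] [StarAddMonoid A] [StarModule ℂ A]
    [Ring A₀] [Algebra ℂ A₀] [StarRing A₀] [StarModule ℂ A₀]
    (ιA : A₀ →ₗ[ℂ] A)
    (hιstar : ∀ x : A₀, ιA (star x) = star (ιA x))
    (lA rA : A₀ →ₗ[ℂ] A →ₗ[ℂ] A)
    -- quasi *-algebra axioms
    (h1 : ∀ (x y : A₀) (a : A), rA y (lA x a) = lA x (rA y a))
    (h2 : ∀ (x y : A₀) (a : A), rA (x * y) a = rA y (rA x a))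
    (h2' : ∀ (x y : A₀) (a : A), lA (x * y) a = lA x (lA y a))
    (h3 : ∀ (x : A₀) (a : A), star (lA x a) = rA (star x) (star a))
    (h4 : ∀ (x : A₀) (a : A), star (rA x a) = lA (star x) (star a))
    (hιmul : ∀ x y : A₀, lA x (ιA y) = ιA (x * y) ∧ rA y (ιA x) = ιA (x * y))
    -- boundedness of left and right multiplications (normed quasi *-algebra)
    (hbdd : ∀ x : A₀, ∃ C : ℝ, ∀ a : A, ‖lA x a‖ ≤ C * ‖a‖ ∧ ‖rA x a‖ ≤ C * ‖a‖)
    -- ω : continuous representable linear functional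
    (ω : A →ₗ[ℂ] ℂ)
    (hωcont : ∃ C : ℝ, ∀ a : A, ‖ω a‖ ≤ C * ‖a‖)
    (hωL1 : ∀ y : A₀, 0 ≤ ω (ιA (star y * y)))
    (hωL2 : ∀ (y z : A₀) (a : A),
      ω (lA (star z) (rA y (star a))) = starRingEnd ℂ (ω (lA (star y) (rA z a))))
    (hωL3 : ∀ a : A, ∃ γ : ℝ, 0 < γ ∧ ∀ y : A₀,
      ‖ω (rA y (star a))‖ ≤ γ * Real.sqrt (ω (ιA (star y * y))).re)
    (x : A₀) :
    -- ω_x(a) := ω(x* a x) is continuous and representable: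
    letI ωx : A → ℂ := fun a => ω (lA (star x) (rA x a))
    ((∃ C : ℝ, ∀ a : A, ‖ωx a‖ ≤ C * ‖a‖) ∧
      (∀ y : A₀, 0 ≤ ωx (ιA (star y * y))) ∧
      (∀ (y z : A₀) (a : A),
        ωx (lA (star z) (rA y (star a))) = starRingEnd ℂ (ωx (lA (star y) (rA z a)))) ∧
      (∀ a : A, ∃ γ : ℝ, 0 < γ ∧ ∀ y : A₀,
        ‖ωx (rA y (star a))‖ ≤ γ * Real.sqrt (ωx (ιA (star y * y))).re)) := by
  -- key computation: ωx(ι(y*y)) = ω(ι(star(y*x)*(y*x)))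
  have key : ∀ y : A₀, lA (star x) (rA x (ιA (star y * y))) = ιA (star (y * x) * (y * x)) := by
    intro y
    rw [(hιmul (star y * y) x).2, (hιmul (star x) (star y * y * x)).1]
    congr 1
    rw [star_mul]
    noncomm_ring
  -- key commutation: moving lA (star x) ∘ rA x inside
  have aux : ∀ (y z : A₀) (a : A),
      lA (star x) (rA x (lA (star z) (rA y a))) = lA (star (z * x)) (rA (y * x) a) := by
    intro y z a
    rw [h1 (star z) x, ← h2 y x, ← h2' (star x) (star z), ← star_mul z x]
  refine ⟨?_, ?_, ?_, ?_⟩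
  · obtain ⟨C, hC⟩ := hωcont
    obtain ⟨C1, hC1⟩ := hbdd (star x)
    obtain ⟨C2, hC2⟩ := hbdd x
    refine ⟨|C| * (|C1| * |C2|), fun a => ?_⟩
    have hb := hC (lA (star x) (rA x a))
    have hb1 := (hC1 (rA x a)).1
    have hb2 := (hC2 a).2
    have n1 : (0:ℝ) ≤ ‖lA (star x) (rA x a)‖ := norm_nonneg _
    have n2 : (0:ℝ) ≤ ‖rA x a‖ := norm_nonneg _
    have n3 : (0:ℝ) ≤ ‖a‖ := norm_nonneg _
    beta_reduce
    calc ‖ω (lA (star x) (rA x a))‖ ≤ C * ‖lA (star x) (rA x a)‖ := hb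
      _ ≤ |C| * ‖lA (star x) (rA x a)‖ := mul_le_mul_of_nonneg_right (le_abs_self C) n1
      _ ≤ |C| * (C1 * ‖rA x a‖) := mul_le_mul_of_nonneg_left hb1 (abs_nonneg C)
      _ ≤ |C| * (|C1| * ‖rA x a‖) :=
          mul_le_mul_of_nonneg_left (mul_le_mul_of_nonneg_right (le_abs_self C1) n2)
            (abs_nonneg C)
      _ ≤ |C| * (|C1| * (C2 * ‖a‖)) :=
          mul_le_mul_of_nonneg_left (mul_le_mul_of_nonneg_left hb2 (abs_nonneg C1)) (abs_nonneg C)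
      _ ≤ |C| * (|C1| * (|C2| * ‖a‖)) :=
          mul_le_mul_of_nonneg_left (mul_le_mul_of_nonneg_left
            (mul_le_mul_of_nonneg_right (le_abs_self C2) n3) (abs_nonneg C1)) (abs_nonneg C)
      _ = |C| * (|C1| * |C2|) * ‖a‖ := by ring
  · intro y
    simpa only [key y] using hωL1 (y * x)
  · intro y z a
    simp only [aux y z (star a), aux z y a]
    exact hωL2 (y * x) (z * x) a
  · intro a
    obtain ⟨γ, hγ, hγ'⟩ := hωL3 (rA x a)
    refine ⟨γ, hγ, fun y => ?_⟩
    have e1 : lA (star x) (rA x (rA y (star a))) = rA (y * x) (star (rA x a)) := by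
      rw [← h2 y x, h4 x a, h1 (star x) (y * x)]
    simp only [e1, key y]
    exact hγ' (y * x)
end
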